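/- arXiv:math/0010167 — 4 statements merged into one kernel-verified Lean document; each statement's English description precedes it below -/
import Mathlib

section
/- Fix a linear order on [n]. The collection nbb(G) of nbb sets of a matroid G is a simplicial complex (i.e., closed under taking subsets) which contains nbc(G) as a subcomplex. -/
/-- A set `S` is line-closed in the matroid `M` if it contains the closure of
each pair of its elements. -/
def IsLineClosed {n : ℕ} (M : Matroid (Fin n)) (S : Set (Fin n)) : Prop :=
  ∀ i ∈ S, ∀ j ∈ S, M.closure {i, j} ⊆ S

/-- The line-closure of `S`: the intersection of all line-closed sets containing `S`. -/
def lineClosure {n : ℕ} (M : Matroid (Fin n)) (S : Set (Fin n)) : Set (Fin n) :=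
  ⋂₀ {T | S ⊆ T ∧ IsLineClosed M T}

/-- We encode a linear ordering of `[n]` by a permutation `π`: the element `i` comes
before `j` when `π i ≤ π j`.  `IsMinWrt π S m` says `m` is the minimum of `S` for this
ordering. -/
def IsMinWrt {n : ℕ} (π : Equiv.Perm (Fin n)) (S : Set (Fin n)) (m : Fin n) : Prop :=
  m ∈ S ∧ ∀ j ∈ S, π m ≤ π j

/-- `S` is an nbb set for the linear order `π`: each element is the minimum of the
line-closure of the set of its successors (itself included) in `S`. -/
def IsNbb {n : ℕ} (M : Matroid (Fin n)) (π : Equiv.Perm (Fin n))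
    (S : Finset (Fin n)) : Prop :=
  ∀ i ∈ S, IsMinWrt π (lineClosure M {j | j ∈ S ∧ π i ≤ π j}) i

/-- `S` is an nbc set for the linear order `π` (Björner's characterization): each
element is the minimum of the matroid closure of the set of its successors in `S`. -/
def IsNbc {n : ℕ} (M : Matroid (Fin n)) (π : Equiv.Perm (Fin n))
    (S : Finset (Fin n)) : Prop :=
  ∀ i ∈ S, IsMinWrt π (M.closure {j | j ∈ S ∧ π i ≤ π j}) i

/-! Every matroid closure is line-closed, so on the ground set the line-closure lies inside the
matroid closure; both nbb-ness of subsets and nbb-ness of nbc sets then follow because the minimum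
of a set is also the minimum of any subset containing it. -/

section

variable {n : ℕ} {M : Matroid (Fin n)} {π : Equiv.Perm (Fin n)}

theorem subset_lineClosure (M : Matroid (Fin n)) (A : Set (Fin n)) : A ⊆ lineClosure M A :=
  fun _ hx _ hT => hT.1 hx

theorem lineClosure_mono {A B : Set (Fin n)} (hAB : A ⊆ B) :
    lineClosure M A ⊆ lineClosure M B :=
  fun _ hx T hT => hx T ⟨hAB.trans hT.1, hT.2⟩

theorem lineClosure_subset_of_isLineClosed {A T : Set (Fin n)} (hAT : A ⊆ T)
    (hT : IsLineClosed M T) : lineClosure M A ⊆ T :=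
  fun _ hx => hx T ⟨hAT, hT⟩

theorem isLineClosed_closure (M : Matroid (Fin n)) (X : Set (Fin n)) :
    IsLineClosed M (M.closure X) :=
  fun _ hi _ hj => M.closure_subset_closure_of_subset_closure (Set.pair_subset hi hj)

theorem lineClosure_subset_closure {A : Set (Fin n)} (hA : A ⊆ M.E) :
    lineClosure M A ⊆ M.closure A :=
  lineClosure_subset_of_isLineClosed (M.subset_closure A hA) (isLineClosed_closure M A)

theorem IsMinWrt.of_subset {S T : Set (Fin n)} {m : Fin n} (hT : IsMinWrt π T m) (hm : m ∈ S)
    (hST : S ⊆ T) : IsMinWrt π S m :=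
  ⟨hm, fun j hj => hT.2 j (hST hj)⟩

theorem IsNbb.subset {S T : Finset (Fin n)} (hS : IsNbb M π S) (hTS : T ⊆ S) :
    IsNbb M π T := fun i hi =>
  (hS i (hTS hi)).of_subset (subset_lineClosure M _ ⟨hi, le_rfl⟩)
    (lineClosure_mono fun _ hj => ⟨hTS hj.1, hj.2⟩)

theorem IsNbc.subset_ground {S : Finset (Fin n)} (hS : IsNbc M π S) : ↑S ⊆ M.E :=
  fun i hi => M.closure_subset_ground _ (hS i hi).1

theorem IsNbc.isNbb {S : Finset (Fin n)} (hS : IsNbc M π S) : IsNbb M π S := fun i hi =>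
  (hS i hi).of_subset (subset_lineClosure M _ ⟨hi, le_rfl⟩)
    (lineClosure_subset_closure fun _ hj => hS.subset_ground hj.1)

end

theorem nbb_simplicialComplex_contains_nbc_general {n : ℕ} (M : Matroid (Fin n))
    (π : Equiv.Perm (Fin n)) :
    (∀ S T : Finset (Fin n), T ⊆ S → IsNbb M π S → IsNbb M π T) ∧
    (∀ S : Finset (Fin n), IsNbc M π S → IsNbb M π S) :=
  ⟨fun _ _ hTS hS => hS.subset hTS, fun _ hS => hS.isNbb⟩

/-- For any fixed linear order, the nbb sets form a simplicial complex containing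
the nbc complex. -/
theorem nbb_simplicialComplex_contains_nbc {n : ℕ} (M : Matroid (Fin n))
    (hE : M.E = Set.univ) (π : Equiv.Perm (Fin n)) :
    (∀ S T : Finset (Fin n), T ⊆ S → IsNbb M π S → IsNbb M π T) ∧
    (∀ S : Finset (Fin n), IsNbc M π S → IsNbb M π S) :=
  nbb_simplicialComplex_contains_nbc_general M π
end

section
/- If the Orlik-Solomon algebra A(G) of a simple matroid G is quadratic (i.e., the surjection Ā(G) → A(G) from the quadratic closure is an isomorphism), then G is line-closed. -/
/-- The generator `e i` of the exterior algebra on `e₁, …, eₙ`. -/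
noncomputable def gen (K : Type*) [CommRing K] {n : ℕ} (i : Fin n) :
    ExteriorAlgebra K (Fin n → K) :=
  ExteriorAlgebra.ι K (Pi.single i 1)

/-- The monomial `e_{i₁} ∧ ⋯ ∧ e_{i_p}` indexed by a list. -/
noncomputable def eProd (K : Type*) [CommRing K] {n : ℕ} (l : List (Fin n)) :
    ExteriorAlgebra K (Fin n → K) :=
  (l.map (gen K)).prod

/-- The boundary `∂ e_S = Σ (-1)^{k-1} e_{S - i_k}` of the monomial indexed by a list. -/
noncomputable def bdryL (K : Type*) [CommRing K] {n : ℕ} (l : List (Fin n)) :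
    ExteriorAlgebra K (Fin n → K) :=
  ∑ k : Fin l.length, ((-1 : K) ^ (k : ℕ)) • eProd K (l.eraseIdx k)

/-- The monomial `e_S` for a finite set `S`, listed in increasing order. -/
noncomputable def eS (K : Type*) [CommRing K] {n : ℕ} (S : Finset (Fin n)) :
    ExteriorAlgebra K (Fin n → K) :=
  eProd K (S.sort (· ≤ ·))

/-- The boundary `∂ e_S` for a finite set `S`, listed in increasing order. -/
noncomputable def bdryS (K : Type*) [CommRing K] {n : ℕ} (S : Finset (Fin n)) :
    ExteriorAlgebra K (Fin n → K) :=
  bdryL K (S.sort (· ≤ ·))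

/-- The quadratic part `𝒥` of the Orlik–Solomon ideal: the (two-sided) ideal of the
exterior algebra generated by the boundaries of dependent 3-element sets, as a
`K`-submodule. -/
noncomputable def OSJ (K : Type*) [CommRing K] {n : ℕ} (M : Matroid (Fin n)) :
    Submodule K (ExteriorAlgebra K (Fin n → K)) :=
  Submodule.span K {z | ∃ x y : ExteriorAlgebra K (Fin n → K), ∃ S : Finset (Fin n),
    S.card = 3 ∧ M.Dep ↑S ∧ z = x * bdryS K S * y}

/-- The Orlik–Solomon ideal `ℐ`: the (two-sided) ideal generated by the boundaries of
all dependent sets, as a `K`-submodule. -/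
noncomputable def OSI (K : Type*) [CommRing K] {n : ℕ} (M : Matroid (Fin n)) :
    Submodule K (ExteriorAlgebra K (Fin n → K)) :=
  Submodule.span K {z | ∃ x y : ExteriorAlgebra K (Fin n → K), ∃ S : Finset (Fin n), M.Dep ↑S ∧ z = x * bdryS K S * y}

open ExteriorAlgebra

section ExteriorAlgebra

variable {K : Type*} {n : ℕ}

lemma ι_mul_ι_sub_add_eq_zero [CommRing K] {V : Type*} [AddCommGroup V] [Module K V]
    {a b c : V} (h : a = b ∨ a = c ∨ b = c) :
    ι K b * ι K c - ι K a * ι K c + ι K a * ι K b = 0 := by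
  rcases h with rfl | rfl | rfl
  · simp
  · rw [ι_sq_zero, sub_zero, ι_add_mul_swap]
  · simp

lemma bdryL_nil [CommRing K] : bdryL K ([] : List (Fin n)) = 0 := by
  simp [bdryL]

lemma bdryL_cons [CommRing K] (i : Fin n) (l : List (Fin n)) :
    bdryL K (i :: l) = eProd K l - gen K i * bdryL K l := by
  simp only [bdryL, List.length_cons, Fin.sum_univ_succ, Fin.val_zero, pow_zero, one_smul,
    List.eraseIdx_cons_zero, Fin.val_succ, List.eraseIdx_cons_succ, eProd, List.map_cons,
    List.prod_cons, Finset.mul_sum, mul_smul_comm, pow_succ, mul_neg_one, neg_smul,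
    Finset.sum_neg_distrib, sub_eq_add_neg]

lemma bdryL_triple [CommRing K] (r s t : Fin n) :
    bdryL K [r, s, t] = gen K s * gen K t - gen K r * gen K t + gen K r * gen K s := by
  simp only [bdryL_cons, bdryL_nil, eProd, List.map_cons, List.map_nil, List.prod_cons,
    List.prod_nil]
  noncomm_ring

lemma map_eProd [CommRing K] {B : Type*} [Ring B] [Algebra K B]
    (F : ExteriorAlgebra K (Fin n → K) →ₐ[K] B) (l : List (Fin n)) :
    F (eProd K l) = (l.map fun i => F (gen K i)).prod := by
  simp [eProd, map_list_prod, Function.comp_def]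

lemma eProd_eq_ιMulti [CommRing K] (l : List (Fin n)) :
    eProd K l = ιMulti K l.length (fun k => Pi.single l[k] 1) := by
  rw [ιMulti_apply, eProd, ← List.ofFn_getElem_eq_map]
  rfl

/-- Pairing against the determinant of the coordinates indexed by `l` sends `e_l` to `1`. -/
lemma eProd_ne_zero [CommRing K] [Nontrivial K] {l : List (Fin n)} (hl : l.Nodup) :
    eProd K l ≠ 0 := by
  classical
  let coords : (Fin n → K) →ₗ[K] (Fin l.length → K) := LinearMap.funLeft K K (l[·])
  let detAt : ∀ k : ℕ, (Fin n → K) [⋀^Fin k]→ₗ[K] K :=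
    Pi.single l.length (Matrix.detRowAlternating.compLinearMap coords)
  have hcoords : (fun k : Fin l.length => coords (Pi.single l[k] 1))
      = (1 : Matrix (Fin l.length) (Fin l.length) K) := by
    funext i j
    simp [coords, Pi.single_apply, Matrix.one_apply, hl.getElem_inj_iff, Fin.ext_iff, eq_comm]
  intro h
  have := liftAlternating_apply_ιMulti detAt (fun k : Fin l.length => Pi.single l[k] 1)
  rw [← eProd_eq_ιMulti, h, map_zero] at this
  simp only [detAt, Pi.single_eq_same, AlternatingMap.compLinearMap_apply, hcoords] at this
  exact zero_ne_one (this.trans Matrix.det_one)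

lemma map_bdryL_append_cons [CommRing K] {B : Type*} [Ring B] [Algebra K B]
    (F : ExteriorAlgebra K (Fin n → K) →ₐ[K] B) {a : Fin n} (ha : F (gen K a) = 0)
    (l₁ l₂ : List (Fin n)) :
    F (bdryL K (l₁ ++ a :: l₂)) = (-1 : K) ^ l₁.length • F (eProd K (l₁ ++ l₂)) := by
  induction l₁ with
  | nil => simp [bdryL_cons, ha]
  | cons x l₁ ih =>
    have hvanish : F (eProd K (l₁ ++ a :: l₂)) = 0 :=
      (map_eProd F _).trans (List.prod_eq_zero (by simp [ha]))
    have hcons : eProd K (x :: (l₁ ++ l₂)) = gen K x * eProd K (l₁ ++ l₂) := rfl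
    rw [List.cons_append, bdryL_cons, map_sub, hvanish, map_mul, ih, List.cons_append, hcons,
      map_mul, List.length_cons, pow_succ, mul_neg_one, neg_smul, mul_smul_comm, zero_sub]

lemma map_bdryL_ne_zero [CommRing K] [Nontrivial K]
    (F : ExteriorAlgebra K (Fin n → K) →ₐ[K] ExteriorAlgebra K (Fin n → K))
    {l : List (Fin n)} (hl : l.Nodup) {a : Fin n} (ha : a ∈ l) (hFa : F (gen K a) = 0)
    (hF : ∀ x ∈ l, x ≠ a → F (gen K x) = gen K x) : F (bdryL K l) ≠ 0 := by
  obtain ⟨l₁, l₂, rfl⟩ := List.append_of_mem ha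
  have hnd : (l₁ ++ l₂).Nodup := hl.sublist (by simp)
  have hfix : F (eProd K (l₁ ++ l₂)) = eProd K (l₁ ++ l₂) := by
    rw [map_eProd, eProd]
    refine congrArg List.prod (List.map_congr_left fun x hx => hF x (by grind) ?_)
    rintro rfl
    exact (List.nodup_middle.mp hl).notMem hx
  rw [map_bdryL_append_cons F hFa, hfix]
  exact ((isUnit_neg_one.pow _).smul_eq_zero).not.mpr (eProd_ne_zero hnd)

end ExteriorAlgebra

section OrlikSolomon

variable {K : Type*} [CommRing K] {n : ℕ}

lemma Finset.exists_sort_eq_triple {T : Finset (Fin n)} (hT : T.card = 3) :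
    ∃ r s t : Fin n, r ≠ s ∧ r ≠ t ∧ s ≠ t ∧ (T : Set (Fin n)) = {r, s, t} ∧
      T.sort (· ≤ ·) = [r, s, t] := by
  obtain ⟨r, s, t, hsort⟩ := List.length_eq_three.mp (by rw [T.length_sort (· ≤ ·), hT])
  have hnd := T.sort_nodup (· ≤ ·)
  refine ⟨r, s, t, by simp_all, by simp_all, by simp_all, ?_, hsort⟩
  ext x
  rw [Finset.mem_coe, ← T.mem_sort (· ≤ ·), hsort]
  simp

lemma exists_algHom_gen_eq {V : Type*} [AddCommGroup V] [Module K V] (w : Fin n → V) :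
    ∃ F : ExteriorAlgebra K (Fin n → K) →ₐ[K] ExteriorAlgebra K V,
      ∀ i, F (gen K i) = ι K (w i) :=
  ⟨ExteriorAlgebra.map ((Pi.basisFun K (Fin n)).constr K w), fun i => by
    rw [gen, map_apply_ι, ← Pi.basisFun_apply, Module.Basis.constr_basis]⟩

lemma bdryS_mem_OSI {M : Matroid (Fin n)} {C : Finset (Fin n)} (hC : M.Dep C) :
    bdryS K C ∈ OSI K M :=
  Submodule.subset_span ⟨1, 1, C, hC, by rw [one_mul, mul_one]⟩

lemma map_eq_zero_of_mem_OSJ {V : Type*} [AddCommGroup V] [Module K V] {M : Matroid (Fin n)}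
    (F : ExteriorAlgebra K (Fin n → K) →ₐ[K] ExteriorAlgebra K V) {w : Fin n → V}
    (hF : ∀ i, F (gen K i) = ι K (w i))
    (hw : ∀ r s t, r ≠ s → r ≠ t → s ≠ t → M.Dep {r, s, t} →
      w r = w s ∨ w r = w t ∨ w s = w t)
    {z : ExteriorAlgebra K (Fin n → K)} (hz : z ∈ OSJ K M) : F z = 0 := by
  suffices OSJ K M ≤ LinearMap.ker F.toLinearMap from this hz
  refine Submodule.span_le.mpr ?_
  rintro _ ⟨x, y, T, hcard, hdep, rfl⟩
  obtain ⟨r, s, t, hrs, hrt, hst, hT, hsort⟩ := T.exists_sort_eq_triple hcard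
  rw [hT] at hdep
  have hboundary : F (bdryS K T) = 0 := by
    rw [bdryS, hsort, bdryL_triple]
    simp only [map_add, map_sub, map_mul, hF]
    exact ι_mul_ι_sub_add_eq_zero (hw r s t hrs hrt hst hdep)
  simp [hboundary]

end OrlikSolomon

section SpanLevel

variable {α : Type*} [LinearOrder α] [Fintype α] {M : Matroid α} {I : Set α}

open Classical in
variable (M I) in
noncomputable def spanLevel (j : α) : WithTop α :=
  (Finset.univ.filter fun x => j ∈ M.closure (I ∩ Set.Iic x)).min

lemma mem_closure_of_spanLevel_eq {j x : α} (h : spanLevel M I j = x) :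
    j ∈ M.closure (I ∩ Set.Iic x) := by
  classical
  simpa using Finset.mem_of_min h

lemma spanLevel_le_of_mem_closure {j x : α} (h : j ∈ M.closure (I ∩ Set.Iic x)) :
    spanLevel M I j ≤ x := by
  classical
  exact Finset.min_le (by simpa using h)

lemma spanLevel_le_max_of_mem_closure_pair {u v j : α} (hj : j ∈ M.closure {u, v}) :
    spanLevel M I j ≤ max (spanLevel M I u) (spanLevel M I v) := by
  cases hu : spanLevel M I u with
  | top => simp
  | coe p =>
    cases hv : spanLevel M I v with
    | top => simp
    | coe q =>
      have hmono {r : α} (hr : r ≤ max p q) :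
          M.closure (I ∩ Set.Iic r) ⊆ M.closure (I ∩ Set.Iic (max p q)) :=
        M.closure_subset_closure (Set.inter_subset_inter_right _ (Set.Iic_subset_Iic.mpr hr))
      rw [← WithTop.coe_max]
      refine spanLevel_le_of_mem_closure (M.closure_subset_closure_of_subset_closure ?_ hj)
      exact Set.pair_subset (hmono (le_max_left p q) (mem_closure_of_spanLevel_eq hu))
        (hmono (le_max_right p q) (mem_closure_of_spanLevel_eq hv))

lemma Matroid.Indep.spanLevel_eq (hI : M.Indep I) {x : α} (hx : x ∈ I) :
    spanLevel M I x = x := by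
  have hle : spanLevel M I x ≤ x := spanLevel_le_of_mem_closure
    (M.mem_closure_of_mem ⟨hx, le_rfl⟩ (Set.inter_subset_left.trans hI.subset_ground))
  obtain ⟨p, hp, hpx⟩ := WithTop.le_coe_iff.mp hle
  rw [hp, WithTop.coe_inj]
  refine hpx.antisymm (not_lt.mp fun hlt => hI.notMem_closure_sdiff_of_mem hx ?_)
  have hsub : I ∩ Set.Iic p ⊆ I \ {x} := fun y hy =>
    ⟨hy.1, fun hyx => (hlt.trans_le' (Set.mem_singleton_iff.mp hyx ▸ hy.2)).false⟩
  exact M.closure_subset_closure hsub (mem_closure_of_spanLevel_eq hp)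

end SpanLevel

lemma eq_or_eq_or_eq_of_le_max {β : Type*} [LinearOrder β] {a b c : β} (ha : a ≤ max b c)
    (hb : b ≤ max a c) (hc : c ≤ max a b) : a = b ∨ a = c ∨ b = c := by
  rcases le_total a b with h₁ | h₁ <;> rcases le_total b c with h₂ | h₂ <;>
    rcases le_total a c with h₃ | h₃ <;>
    simp_all [le_antisymm_iff]

section Matroid

variable {α : Type*} {M : Matroid α}

lemma Matroid.mem_closure_pair_of_dep_triple {r s t : α} (hrs : M.Indep {r, s}) (hrt : r ≠ t)
    (hst : s ≠ t) (hdep : M.Dep {r, s, t}) : t ∈ M.closure {r, s} := by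
  rwa [hrs.mem_closure_iff_of_notMem (by simp [hrt.symm, hst.symm]), Set.insert_comm t r,
    Set.pair_comm t s]

lemma Matroid.eq_or_eq_or_eq_of_dep_triple (hsimple : ∀ i j : α, i ≠ j → M.Indep {i, j})
    {β : Type*} [LinearOrder β] {f : α → β}
    (hf : ∀ u v j, j ∈ M.closure {u, v} → f j ≤ max (f u) (f v))
    {r s t : α} (hrs : r ≠ s) (hrt : r ≠ t) (hst : s ≠ t) (hdep : M.Dep {r, s, t}) :
    f r = f s ∨ f r = f t ∨ f s = f t := by
  have hdep' : M.Dep {s, t, r} := by rwa [Set.insert_comm, Set.pair_comm] at hdep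
  have hdep'' : M.Dep {r, t, s} := by rwa [Set.pair_comm] at hdep
  exact eq_or_eq_or_eq_of_le_max
    (hf s t r (mem_closure_pair_of_dep_triple (hsimple s t hst) hrs.symm hrt.symm hdep'))
    (hf r t s (mem_closure_pair_of_dep_triple (hsimple r t hrt) hrs hst.symm hdep''))
    (hf r s t (mem_closure_pair_of_dep_triple (hsimple r s hrs) hrt hst hdep))

end Matroid

lemma IsLineClosed.ite_le_max {n : ℕ} {M : Matroid (Fin n)} {S : Set (Fin n)}
    [DecidablePred (· ∈ S)] (hS : IsLineClosed M S) {β : Type*} [LinearOrder β] [OrderTop β]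
    {f : Fin n → β} (hf : ∀ u v j, j ∈ M.closure {u, v} → f j ≤ max (f u) (f v))
    {u v j : Fin n} (hj : j ∈ M.closure {u, v}) :
    (if j ∈ S then f j else ⊤) ≤ max (if u ∈ S then f u else ⊤) (if v ∈ S then f v else ⊤) := by
  by_cases hu : u ∈ S
  · by_cases hv : v ∈ S
    · simp [hu, hv, hS u hu v hv hj, hf u v j hj]
    · simp [hv]
  · simp [hu]

/-- If the Orlik–Solomon algebra `A(G) = ℰ/ℐ` of a simple matroid is quadratic, i.e.
`ℐ = 𝒥` so that the surjection `Ā(G) → A(G)` is an isomorphism, then `G` is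
line-closed. -/
theorem lineClosed_of_quadratic (K : Type*) [Field K] {n : ℕ} (M : Matroid (Fin n))
    (hE : M.E = Set.univ) (hsimple : ∀ i j : Fin n, i ≠ j → M.Indep {i, j})
    (hquad : OSI K M = OSJ K M) :
    ∀ S : Set (Fin n), IsLineClosed M S → M.closure S = S := by
  classical
  intro S hS
  have hSE : S ⊆ M.E := hE ▸ S.subset_univ
  refine (M.subset_closure S hSE).antisymm' fun a haS => by_contra fun ha => ?_
  obtain ⟨I, hI⟩ := M.exists_isBasis S hSE
  let level : Fin n → WithTop (Fin n) := fun j => if j ∈ S then spanLevel M I j else ⊤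
  have hlevel : ∀ u v j, j ∈ M.closure {u, v} → level j ≤ max (level u) (level v) :=
    fun _ _ _ => hS.ite_le_max fun _ _ _ => spanLevel_le_max_of_mem_closure_pair (I := I)
  let vec : WithTop (Fin n) → (Fin n → K) := WithTop.recTopCoe 0 (Pi.single · 1)
  obtain ⟨F, hF⟩ := exists_algHom_gen_eq (K := K) (vec ∘ level)
  have hkill : ∀ z ∈ OSJ K M, F z = 0 := fun z => map_eq_zero_of_mem_OSJ F hF
    fun r s t hrs hrt hst hdep => (M.eq_or_eq_or_eq_of_dep_triple hsimple hlevel hrs hrt hst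
      hdep).imp (congrArg vec) (.imp (congrArg vec) (congrArg vec))
  have hC : M.Dep (insert a I) :=
    hI.indep.insert_dep_iff.mpr ⟨hI.closure_eq_closure ▸ haS, fun h => ha (hI.subset h)⟩
  let J := I.toFinite.toFinset
  have hCJ : bdryS K (insert a J) ∈ OSJ K M := hquad ▸ bdryS_mem_OSI (by simpa [J] using hC)
  refine map_bdryL_ne_zero F (Finset.sort_nodup _ _) (a := a) (by simp) ?_ ?_ (hkill _ hCJ)
  · simp [hF, vec, level, ha]
  · intro x hx hxa
    have hxI : x ∈ I := by simpa [J, hxa] using hx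
    rw [hF]
    simp [vec, level, hI.subset hxI, hI.indep.spanLevel_eq hxI, gen]
end

section
/- If a simple matroid G on [n] with n > rk(G) has a basis B each of whose two-element subsets is closed in G, then G is not line-closed (and hence A(G) is not quadratic). -/
theorem isLineClosed_of_closure_pair_eq {n : ℕ} {M : Matroid (Fin n)} {S : Set (Fin n)}
    (h : ∀ i ∈ S, ∀ j ∈ S, M.closure {i, j} = {i, j}) : IsLineClosed M S := by
  intro i hi j hj
  rw [h i hi j hj]
  exact Set.insert_subset hi (Set.singleton_subset_iff.2 hj)

theorem Matroid.IsBase.closure_ne_self {α : Type*} {M : Matroid α} {B : Set α}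
    (hB : M.IsBase B) (hBE : B ≠ M.E) : M.closure B ≠ B := by
  rw [hB.closure_eq]
  exact hBE.symm

theorem Set.ne_univ_of_ncard_lt {α : Type*} {S : Set α} (hS : S.ncard < Nat.card α) :
    S ≠ Set.univ := by
  rintro rfl
  rw [Set.ncard_univ] at hS
  exact lt_irrefl _ hS

theorem not_lineClosed_of_base_pairs_closed_general {n : ℕ} (M : Matroid (Fin n))
    (hE : M.E = Set.univ)
    (B : Set (Fin n)) (hB : M.IsBase B) (hcard : B.ncard < n)
    (hpairs : ∀ i ∈ B, ∀ j ∈ B, M.closure {i, j} = {i, j}) :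
    ¬ ∀ S : Set (Fin n), IsLineClosed M S → M.closure S = S := by
  intro hclosed
  have hBE : B ≠ M.E := hE ▸ Set.ne_univ_of_ncard_lt (by simpa using hcard)
  exact hB.closure_ne_self hBE (hclosed B (isLineClosed_of_closure_pair_eq hpairs))

/-- If a simple matroid on `[n]` of rank less than `n` (i.e. a basis has fewer than `n`
elements) has a basis each of whose two-element subsets is closed, then the matroid is
not line-closed. -/
theorem not_lineClosed_of_base_pairs_closed {n : ℕ} (M : Matroid (Fin n))
    (hE : M.E = Set.univ) (hsimple : ∀ i j : Fin n, i ≠ j → M.Indep {i, j})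
    (B : Set (Fin n)) (hB : M.IsBase B) (hcard : B.ncard < n)
    (hpairs : ∀ i ∈ B, ∀ j ∈ B, M.closure {i, j} = {i, j}) :
    ¬ ∀ S : Set (Fin n), IsLineClosed M S → M.closure S = S :=
  not_lineClosed_of_base_pairs_closed_general M hE B hB hcard hpairs
end

section
/- If a matroid G on [n] has a basis B whose line-closure ℓc(B) equals [n], then G is taut: G is not a quotient of any matroid G' ≠ G on [n] having the same points and lines as G (i.e., with the same rank-3 truncation). -/
/-- `M` is a quotient of `M'` if every closed set of `M` is closed in `M'`. -/
def IsQuotientOf {n : ℕ} (M M' : Matroid (Fin n)) : Prop :=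
  ∀ F : Set (Fin n), M.closure F = F → M'.closure F = F

/-- `M` and `M'` have the same points and lines, i.e. the same rank-3 truncations:
they have the same dependent sets of size at most 3. -/
def SamePointsAndLines {n : ℕ} (M M' : Matroid (Fin n)) : Prop :=
  ∀ S : Set (Fin n), S.ncard ≤ 3 → (M.Dep S ↔ M'.Dep S)

open Set Matroid

variable {n : ℕ} {M M' : Matroid (Fin n)} {B I R S T X : Set (Fin n)}

theorem lineClosure_subset (hST : S ⊆ T) (hT : IsLineClosed M T) : lineClosure M S ⊆ T :=
  sInter_subset_of_mem ⟨hST, hT⟩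

namespace IsQuotientOf

theorem ground_subset (hQ : IsQuotientOf M M') : M.E ⊆ M'.E :=
  (hQ _ M.closure_ground).symm.subset.trans (M'.closure_subset_ground _)

theorem closure_subset (hQ : IsQuotientOf M M') (hX : X ⊆ M.E) :
    M'.closure X ⊆ M.closure X :=
  (M'.closure_mono (M.subset_closure X hX)).trans (hQ _ (M.closure_closure X)).subset

theorem indep (hQ : IsQuotientOf M M') (hI : M.Indep I) : M'.Indep I := by
  rw [indep_iff_forall_notMem_closure_sdiff (hI.subset_ground.trans hQ.ground_subset)]
  exact fun e he hecl ↦ hI.notMem_closure_sdiff_of_mem he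
    (hQ.closure_subset (sdiff_subset.trans hI.subset_ground) hecl)

theorem ground_eq_of_isBase (hQ : IsQuotientOf M M') (hB : M.IsBase B) (hB' : M'.IsBase B) :
    M'.E = M.E := by
  refine Subset.antisymm ?_ hQ.ground_subset
  calc M'.E = M'.closure B := hB'.closure_eq.symm
    _ ⊆ M.closure B := hQ.closure_subset hB.subset_ground
    _ = M.E := hB.closure_eq

theorem eq_of_isBase (hQ : IsQuotientOf M M') (hB : M.IsBase B) (hB' : M'.IsBase B) :
    M' = M := by
  have hE := hQ.ground_eq_of_isBase hB hB'
  refine ext_indep hE fun I _ ↦ ⟨fun hI' ↦ ?_, hQ.indep⟩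
  obtain ⟨B₁, hB₁, hIB₁⟩ := hI'.exists_isBase_superset
  obtain ⟨J, hJ⟩ := M.exists_isBasis B₁ (hB₁.subset_ground.trans hE.subset)
  have hJ_base : M.IsBase J := hJ.indep.isBase_of_ground_subset_closure <| by
    rw [hJ.closure_eq_closure, ← hE, ← hB₁.closure_eq]
    exact hQ.closure_subset (hB₁.subset_ground.trans hE.subset)
  have hcard : B₁.encard ≤ J.encard := by
    rw [hB₁.encard_eq_encard_of_isBase hB', hJ_base.encard_eq_encard_of_isBase hB]
  rw [← J.toFinite.eq_of_subset_of_encard_le hJ.subset hcard] at hIB₁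
  exact hJ.indep.subset hIB₁

end IsQuotientOf

namespace SamePointsAndLines

theorem indep_iff (hPL : SamePointsAndLines M M') (hE : M.E = M'.E) (hS : S.ncard ≤ 3) :
    M.Indep S ↔ M'.Indep S := by
  rw [indep_iff_not_dep, indep_iff_not_dep, hPL S hS, hE]

theorem restrict_eq (hPL : SamePointsAndLines M M') (hE : M.E = M'.E) (hR : R.ncard ≤ 3) :
    M ↾ R = M' ↾ R :=
  ext_indep rfl fun I hIR ↦ by
    simp only [restrict_indep_iff, hPL.indep_iff hE ((ncard_le_ncard hIR).trans hR)]

/-- Membership of `x` in the closure of `S` is decided inside the restriction to `insert x S`. -/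
theorem closure_subset (hPL : SamePointsAndLines M M') (hE : M.E = M'.E) (hS : S.ncard ≤ 2)
    (hSE : S ⊆ M.E) : M.closure S ⊆ M'.closure S := by
  intro x hx
  have hR : insert x S ⊆ M.E := insert_subset (M.closure_subset_ground S hx) hSE
  have hres : (M ↾ insert x S).closure S = (M' ↾ insert x S).closure S := by
    rw [hPL.restrict_eq hE ((ncard_insert_le x S).trans (by omega))]
  rw [restrict_closure_eq _ (subset_insert x S) hR,
    restrict_closure_eq _ (subset_insert x S) (hE ▸ hR)] at hres
  exact (hres.subset ⟨hx, mem_insert x S⟩).1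

theorem isLineClosed_closure (hPL : SamePointsAndLines M M') (hE : M.E = M'.E) (X : Set (Fin n)) :
    IsLineClosed M (M'.closure X) := by
  intro i hi j hj
  have hij : {i, j} ⊆ M'.closure X := insert_subset hi (singleton_subset_iff.mpr hj)
  calc M.closure {i, j} ⊆ M'.closure {i, j} :=
        hPL.closure_subset hE ((ncard_insert_le i {j}).trans (by simp))
          (hij.trans (hE ▸ M'.closure_subset_ground X))
    _ ⊆ M'.closure X := M'.closure_subset_closure_of_subset_closure hij

end SamePointsAndLines

/-- If a matroid `M` on `[n]` has a basis whose line-closure is all of `[n]`, then `M`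
is taut: it is not a quotient of any matroid `M' ≠ M` with the same points and lines. -/
theorem taut_of_base_lineClosure_univ {n : ℕ} (M : Matroid (Fin n))
    (hE : M.E = Set.univ) (B : Set (Fin n)) (hB : M.IsBase B)
    (hlc : lineClosure M B = Set.univ) :
    ∀ M' : Matroid (Fin n), M'.E = Set.univ → SamePointsAndLines M M' →
      IsQuotientOf M M' → M' = M := by
  intro M' hE' hPL hQ
  have hspan : M'.E ⊆ M'.closure B := by
    rw [hE', ← hlc]
    exact lineClosure_subset (M'.subset_closure B (hE' ▸ subset_univ B))
      (hPL.isLineClosed_closure (hE.trans hE'.symm) B)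
  exact hQ.eq_of_isBase hB ((hQ.indep hB.indep).isBase_of_ground_subset_closure hspan)
end
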